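/- arXiv:1609.08057 — 2 statements merged into one kernel-verified Lean document; each statement's English description precedes it below -/
import Mathlib

section
/- Let Δ(t) ∈ ℤ[t^{±1}] satisfy Δ(1) = ±1. Then the natural map Δ(t)^{-1}ℤ[t^{±1}]/ℤ[t^{±1}] → ℚ(t)/Λ_S, induced by the inclusion Δ(t)^{-1}ℤ[t^{±1}] ⊆ ℚ(t), is injective, where Λ_S = ℤ[t^{±1}, (1-t)^{-1}]. -/
/-!
Modulo `1 - t` every Laurent polynomial is congruent to its value at `t = 1`, so `Δ(1) = ±1`
makes `Δ` coprime to `1 - t`, hence to `(1 - t)^k`. If `aΔ + b(1 - t)^k = 1` and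
`p/Δ = q/(1 - t)^k`, then `p/Δ = ap + bq` is a Laurent polynomial.
-/

open LaurentPolynomial

/-- Evaluation of a Laurent polynomial over `ℤ` at `t = 1` (the ring homomorphism
`ℤ[T;T⁻¹] → ℤ` sending `T ↦ 1`). -/
noncomputable def laurentEvalOne : LaurentPolynomial ℤ →+* ℤ :=
  AddMonoidAlgebra.liftNCRingHom (RingHom.id ℤ) 1 (fun _ _ => Commute.one_right _)

theorem exists_div_eq_algebraMap_of_isCoprime {R K : Type*} [CommRing R] [Field K]
    [Algebra R K] {d s p q : R} (hds : IsCoprime d s)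
    (h : algebraMap R K p / algebraMap R K d = algebraMap R K q / algebraMap R K s) :
    ∃ r : R, algebraMap R K p / algebraMap R K d = algebraMap R K r := by
  by_cases hd : algebraMap R K d = 0
  · exact ⟨0, by rw [hd, div_zero, map_zero]⟩
  by_cases hs : algebraMap R K s = 0
  · exact ⟨0, by rw [h, hs, div_zero, map_zero]⟩
  obtain ⟨a, b, hab⟩ := hds
  have hab' := congrArg (algebraMap R K) hab
  push_cast at hab'
  rw [div_eq_div_iff hd hs] at h
  refine ⟨a * p + b * q, ?_⟩
  rw [div_eq_iff hd]
  push_cast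
  linear_combination (-(algebraMap R K p)) * hab' + (algebraMap R K b) * h

theorem LaurentPolynomial.one_sub_T_one_dvd_one_sub_T {R : Type*} [CommRing R] (n : ℤ) :
    (1 - T 1 : R[T;T⁻¹]) ∣ 1 - T n := by
  induction n using Int.induction_on with
  | zero => simp
  | succ n ih =>
    have : (1 - T (n + 1) : R[T;T⁻¹]) = (1 - T n) + T n * (1 - T 1) := by
      rw [mul_sub, ← T_add]; ring
    exact this ▸ dvd_add ih (dvd_mul_left _ _)
  | pred n ih =>
    have : (1 - T (-n - 1) : R[T;T⁻¹]) = (1 - T (-n)) - T (-n - 1) * (1 - T 1) := by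
      rw [mul_sub, ← T_add]; ring_nf
    exact this ▸ dvd_sub ih (dvd_mul_left _ _)

theorem laurentEvalOne_C_mul_T (a n : ℤ) : laurentEvalOne (C a * T n) = a := by
  rw [← single_eq_C_mul_T]
  simpa [laurentEvalOne, AddMonoidAlgebra.liftNCRingHom] using
    AddMonoidAlgebra.liftNC_single (R := ℤ) (G := ℤ)
      ((RingHom.id ℤ) : ℤ →+ ℤ) (1 : Multiplicative ℤ →* ℤ) n a

theorem one_sub_T_one_dvd_sub_C_laurentEvalOne (f : ℤ[T;T⁻¹]) :
    (1 - T 1 : ℤ[T;T⁻¹]) ∣ f - C (laurentEvalOne f) := by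
  induction f using LaurentPolynomial.induction_on' with
  | add f g hf hg =>
    rw [map_add, map_add, add_sub_add_comm]
    exact dvd_add hf hg
  | C_mul_T n a =>
    rw [laurentEvalOne_C_mul_T, show C a * T n - C a = -(C a * (1 - T n)) by ring]
    exact (dvd_mul_of_dvd_right (one_sub_T_one_dvd_one_sub_T n) _).neg_right

theorem isCoprime_one_sub_T_one_of_isUnit_laurentEvalOne {f : ℤ[T;T⁻¹]}
    (hf : IsUnit (laurentEvalOne f)) : IsCoprime f (1 - T 1) := by
  obtain ⟨g, hg⟩ := one_sub_T_one_dvd_sub_C_laurentEvalOne f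
  rw [← sub_add_cancel f (C (laurentEvalOne f)), hg, add_comm]
  exact (isCoprime_one_left.of_isCoprime_of_dvd_left (hf.map C).dvd).add_mul_left_left g

/-- Let `Δ ∈ ℤ[t^{±1}]` with `Δ(1) = ±1`.  Then the natural map
`Δ⁻¹ℤ[t^{±1}]/ℤ[t^{±1}] → ℚ(t)/Λ_S` is injective, where `Λ_S = ℤ[t^{±1},(1-t)^{-1}]`.
Concretely: inside the fraction field `ℚ(t)` of `ℤ[T;T⁻¹]`, if an element `p/Δ` of
`Δ⁻¹ℤ[t^{±1}]` lies in `Λ_S` (i.e. equals `q/(1-t)^k` for some `q ∈ ℤ[t^{±1}]`, `k ∈ ℕ`),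
then it already lies in `ℤ[t^{±1}]`. -/
theorem deltaInv_mod_laurent_to_ratfunc_mod_lambdaS_injective
    (Δ : LaurentPolynomial ℤ) (hΔ : laurentEvalOne Δ = 1 ∨ laurentEvalOne Δ = -1)
    (p q : LaurentPolynomial ℤ) (k : ℕ)
    (h : algebraMap (LaurentPolynomial ℤ) (FractionRing (LaurentPolynomial ℤ)) p /
          algebraMap (LaurentPolynomial ℤ) (FractionRing (LaurentPolynomial ℤ)) Δ =
        algebraMap (LaurentPolynomial ℤ) (FractionRing (LaurentPolynomial ℤ)) q /
          algebraMap (LaurentPolynomial ℤ) (FractionRing (LaurentPolynomial ℤ))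
            ((1 - T 1) ^ k)) :
    ∃ r : LaurentPolynomial ℤ,
      algebraMap (LaurentPolynomial ℤ) (FractionRing (LaurentPolynomial ℤ)) p /
          algebraMap (LaurentPolynomial ℤ) (FractionRing (LaurentPolynomial ℤ)) Δ =
        algebraMap (LaurentPolynomial ℤ) (FractionRing (LaurentPolynomial ℤ)) r := by
  have hcop : IsCoprime Δ ((1 - T 1) ^ k) :=
    (isCoprime_one_sub_T_one_of_isUnit_laurentEvalOne (Int.isUnit_iff.mpr hΔ)).pow_right
  exact exists_div_eq_algebraMap_of_isCoprime hcop h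
end

section
/- Let R be a commutative ring with involution r ↦ r̄, let Q be its field of fractions (assume R is a domain, involution extending to Q), and let H be an n×n Hermitian matrix over R (H̄^T = H) that is invertible over Q. Then the pairing on R^n/H^T R^n × R^n/H^T R^n given by (a,b) ↦ −a^T H^{-1} b̄ ∈ Q/R is well-defined (independent of representatives), sesquilinear (linear in a, conjugate-linear in b), and Hermitian: the pairing of (a,b) equals the conjugate of the pairing of (b,a) in Q/R. -/
open Matrix

/-- The Seifert-matrix pairing `(a, b) ↦ −aᵀ H⁻¹ b̄`, with values in the fraction field
`Q = Frac(R)`, where `H⁻¹` is computed over `Q` and `b̄` is the entrywise application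
of the involution `σ` of `R`. -/
noncomputable def seifertPairing {R : Type*} [CommRing R] [IsDomain R] {n : ℕ}
    (σ : R ≃+* R) (H : Matrix (Fin n) (Fin n) R) (a b : Fin n → R) : FractionRing R :=
  -(dotProduct (fun i => algebraMap R (FractionRing R) (a i))
    (((H.map (algebraMap R (FractionRing R)))⁻¹).mulVec
      (fun i => algebraMap R (FractionRing R) (σ (b i)))))

/-- The quotient map `Q → Q/R`, where `Q/R` is the quotient of `Q = Frac(R)` by the
image of `R`, as a map of `R`-modules. -/
noncomputable def modR (R : Type*) [CommRing R] [IsDomain R] :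
    FractionRing R →ₗ[R]
      (FractionRing R ⧸ LinearMap.range (Algebra.linearMap R (FractionRing R))) :=
  Submodule.mkQ (LinearMap.range (Algebra.linearMap R (FractionRing R)))

/-! Write `M` for `H` viewed over `Q`. Linearity and the Hermitian identity hold already in `Q`:
applying `τ` entrywise turns `M` into `Mᵀ` since `H` is Hermitian, and `(Mᵀ)⁻¹ = (M⁻¹)ᵀ`, so
`τ ⟨b, a⟩ = ⟨a, b⟩`. Changing a representative changes the value by an element of `R`:
`⟨Hᵀ x, b⟩ = -(x ⬝ᵥ b̄)` because `Mᵀ` cancels against `M⁻¹`, and `⟨a, Hᵀ y⟩ = -(a ⬝ᵥ ȳ)` because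
the conjugate of `Hᵀ y` is `H ȳ`. -/

namespace Matrix

variable {m : Type*} [Fintype m] [DecidableEq m]

theorem map_inv {K L : Type*} [Field K] [Field L] (f : K →+* L) (A : Matrix m m K) :
    (A.map f)⁻¹ = A⁻¹.map f := by
  have hdet : (A.map f).det = f A.det := (f.map_det A).symm
  have hadj : (A.map f).adjugate = A.adjugate.map f := (f.map_adjugate A).symm
  rw [inv_def, inv_def, Ring.inverse_eq_inv, Ring.inverse_eq_inv, hdet, hadj, ← map_inv₀]
  ext i j
  simp

theorem isUnit_det_map_algebraMap {R K : Type*} [CommRing R] [Field K] [Algebra R K]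
    [IsFractionRing R K] {A : Matrix m m R} (hA : A.det ≠ 0) :
    IsUnit (A.map (algebraMap R K)).det := by
  rw [← RingHom.mapMatrix_apply, ← RingHom.map_det, isUnit_iff_ne_zero]
  exact (map_ne_zero_iff _ (IsFractionRing.injective R K)).mpr hA

end Matrix

section SeifertPairing

variable {R : Type*} [CommRing R] [IsDomain R] {n : ℕ} (σ : R ≃+* R)
  (H : Matrix (Fin n) (Fin n) R)

theorem seifertPairing_add_left (a a' b : Fin n → R) :
    seifertPairing σ H (a + a') b = seifertPairing σ H a b + seifertPairing σ H a' b := by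
  simp only [seifertPairing, Pi.add_apply, map_add]
  rw [← neg_add, ← add_dotProduct]
  rfl

theorem seifertPairing_smul_left (a b : Fin n → R) (r : R) :
    seifertPairing σ H (r • a) b = r • seifertPairing σ H a b := by
  simp only [seifertPairing, Pi.smul_apply, smul_eq_mul, map_mul, Algebra.smul_def]
  rw [← smul_eq_mul, smul_neg, ← smul_dotProduct]
  rfl

theorem seifertPairing_add_right (a b b' : Fin n → R) :
    seifertPairing σ H a (b + b') = seifertPairing σ H a b + seifertPairing σ H a b' := by
  simp only [seifertPairing, Pi.add_apply, map_add]
  rw [← neg_add, ← dotProduct_add, ← mulVec_add]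
  rfl

theorem seifertPairing_smul_right (a b : Fin n → R) (r : R) :
    seifertPairing σ H a (r • b) = σ r • seifertPairing σ H a b := by
  simp only [seifertPairing, Pi.smul_apply, smul_eq_mul, map_mul, Algebra.smul_def]
  rw [← smul_eq_mul, smul_neg, ← dotProduct_smul, ← mulVec_smul]
  rfl

theorem seifertPairing_transpose_mulVec_left (hdet : H.det ≠ 0) (x b : Fin n → R) :
    seifertPairing σ H (Hᵀ *ᵥ x) b =
      algebraMap R (FractionRing R) (-(x ⬝ᵥ fun i => σ (b i))) := by
  set M := H.map (algebraMap R (FractionRing R))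
  have hx : (fun i => algebraMap R _ ((Hᵀ *ᵥ x) i)) = Mᵀ *ᵥ fun i => algebraMap R _ (x i) := by
    ext i
    rw [RingHom.map_mulVec, transpose_map]
    rfl
  rw [seifertPairing, hx, mulVec_transpose, ← dotProduct_mulVec, mulVec_mulVec,
    mul_nonsing_inv _ (isUnit_det_map_algebraMap hdet), one_mulVec, map_neg,
    RingHom.map_dotProduct]
  rfl

theorem seifertPairing_transpose_mulVec_right (hherm : (H.map σ)ᵀ = H) (hdet : H.det ≠ 0)
    (a y : Fin n → R) :
    seifertPairing σ H a (Hᵀ *ᵥ y) =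
      algebraMap R (FractionRing R) (-(a ⬝ᵥ fun i => σ (y i))) := by
  set M := H.map (algebraMap R (FractionRing R))
  have hy : (fun i => algebraMap R _ (σ ((Hᵀ *ᵥ y) i))) =
      M *ᵥ fun i => algebraMap R _ (σ (y i)) := by
    ext i
    rw [← RingEquiv.coe_toRingHom, RingHom.map_mulVec, RingEquiv.coe_toRingHom, transpose_map,
      hherm, RingHom.map_mulVec]
    rfl
  rw [seifertPairing, hy, mulVec_mulVec, nonsing_inv_mul _ (isUnit_det_map_algebraMap hdet),
    one_mulVec, map_neg, RingHom.map_dotProduct]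
  rfl

theorem modR_algebraMap (r : R) : modR R (algebraMap R (FractionRing R) r) = 0 :=
  (Submodule.Quotient.mk_eq_zero _).mpr ⟨r, rfl⟩

theorem seifertPairing_conj_symm (hσ : ∀ r, σ (σ r) = r) (τ : FractionRing R ≃+* FractionRing R)
    (hτ : ∀ r, τ (algebraMap R (FractionRing R) r) = algebraMap R (FractionRing R) (σ r))
    (hherm : (H.map σ)ᵀ = H) (a b : Fin n → R) :
    τ (seifertPairing σ H b a) = seifertPairing σ H a b := by
  set φ := algebraMap R (FractionRing R)
  set M := H.map φ
  have hM : M.map τ = Mᵀ :=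
    calc M.map τ = (H.map σ).map φ := by ext; simp [M, hτ]
      _ = Mᵀ := by rw [← transpose_transpose (H.map σ), hherm, transpose_map]
  have hτ_mulVec : ∀ v, (fun i => τ ((M⁻¹ *ᵥ v) i)) = (M.map τ)⁻¹ *ᵥ fun i => τ (v i) := by
    intro v
    ext i
    rw [← RingEquiv.coe_toRingHom, Matrix.map_inv, RingHom.map_mulVec]
    rfl
  have hb : (fun i => τ (φ (b i))) = fun i => φ (σ (b i)) := funext fun i => hτ _
  have ha : (fun i => τ (φ (σ (a i)))) = fun i => φ (a i) := funext fun i => by rw [hτ, hσ]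
  rw [seifertPairing, map_neg, ← RingEquiv.coe_toRingHom, RingHom.map_dotProduct]
  change -((fun i => τ (φ (b i))) ⬝ᵥ fun i => τ ((M⁻¹ *ᵥ _) i)) = _
  rw [hτ_mulVec, hb, ha, hM, ← transpose_nonsing_inv, dotProduct_transpose_mulVec]
  rfl

end SeifertPairing

/-- Let `R` be an integral domain with involution `σ`, `Q = Frac(R)` with
the induced involution `τ`, and let `H` be an `n×n` Hermitian matrix over `R`
(`conjugate-transpose(H) = H`) invertible over `Q` (`det H ≠ 0`).  Then the pairing
`(a,b) ↦ −aᵀ H⁻¹ b̄ ∈ Q/R` on `R^n/HᵀR^n`: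
(1) is well defined (independent of the representatives modulo `Hᵀ R^n`);
(2) is additive and `R`-linear in the first variable;
(3) is additive and conjugate-linear in the second variable;
(4) is Hermitian: `⟨a,b⟩ = τ⟨b,a⟩` in `Q/R`. -/
theorem seifertPairing_wellDefined_sesquilinear_hermitian
    {R : Type*} [CommRing R] [IsDomain R] {n : ℕ}
    (σ : R ≃+* R) (hσ : ∀ r, σ (σ r) = r)
    (τ : FractionRing R ≃+* FractionRing R)
    (hτ : ∀ r : R, τ (algebraMap R (FractionRing R) r) = algebraMap R (FractionRing R) (σ r))
    (H : Matrix (Fin n) (Fin n) R)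
    (hherm : (H.map σ)ᵀ = H) (hdet : H.det ≠ 0) :
    (∀ (a b x y : Fin n → R),
      modR R (seifertPairing σ H (a + Hᵀ.mulVec x) (b + Hᵀ.mulVec y)) =
        modR R (seifertPairing σ H a b)) ∧
    (∀ (a a' b : Fin n → R) (r : R),
      modR R (seifertPairing σ H (a + a') b) =
          modR R (seifertPairing σ H a b) + modR R (seifertPairing σ H a' b) ∧
      modR R (seifertPairing σ H (r • a) b) = r • modR R (seifertPairing σ H a b)) ∧
    (∀ (a b b' : Fin n → R) (r : R),
      modR R (seifertPairing σ H a (b + b')) =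
          modR R (seifertPairing σ H a b) + modR R (seifertPairing σ H a b') ∧
      modR R (seifertPairing σ H a (r • b)) = σ r • modR R (seifertPairing σ H a b)) ∧
    (∀ a b : Fin n → R,
      modR R (seifertPairing σ H a b) = modR R (τ (seifertPairing σ H b a))) := by
  refine ⟨fun a b x y => ?_, fun a a' b r => ?_, fun a b b' r => ?_, fun a b => ?_⟩
  · rw [seifertPairing_add_left, seifertPairing_transpose_mulVec_left σ H hdet,
      seifertPairing_add_right, seifertPairing_transpose_mulVec_right σ H hherm hdet,
      map_add, map_add, modR_algebraMap, modR_algebraMap, add_zero, add_zero]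
  · rw [seifertPairing_add_left, seifertPairing_smul_left]
    exact ⟨map_add _ _ _, map_smul _ _ _⟩
  · rw [seifertPairing_add_right, seifertPairing_smul_right]
    exact ⟨map_add _ _ _, map_smul _ _ _⟩
  · rw [seifertPairing_conj_symm σ H hσ τ hτ hherm]
end
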